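/- Let f : ℝ^n → ℝ be convex, differentiable, and L-smooth, let Ω ⊆ ℝ^n be a nonempty compact convex set of diameter at most D, let x* ∈ Ω minimize f over Ω, and fix δ > 0. Let x_{-1} ∈ Ω and define, for k = 0, 1, 2, …, γ_k = 2/(k+2), ε_k = (L D²/2) γ_k δ, a point v_k ∈ Ω satisfying ⟨∇f(x_{k−1}), v_k⟩ ≤ min_{v ∈ Ω} ⟨∇f(x_{k−1}), v⟩ + ε_k, and x_k = (1 − γ_k) x_{k−1} + γ_k v_k. Then for every k ≥ 0, f(x_k) − f(x*) ≤ 2 L D² (1 + δ)/(k + 2). -/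

import Mathlib

/-!
Convexity gives `⟪∇f x, x* - x⟫ ≤ f x* - f x`, and the Lipschitz gradient gives the descent bound
`f y ≤ f x + ⟪∇f x, y - x⟫ + (L/2)‖y - x‖²`. Along a step `x ↦ x + γ (v - x)` whose direction is
within `ε` of `⟪∇f x, x*⟫`, they combine into the contraction
`h_{k+1} ≤ (1 - γ_k) h_k + γ_k² C / 2` for the gap `h_k = f x_k - f x*` with `C = L D² (1 + δ)`,
and for `γ_k = 2/(k+2)` induction turns it into `h_k ≤ 2C/(k+2)`.
-/

open Set
open AffineMap (lineMap hasDerivAt_lineMap lineMap_apply_zero lineMap_apply_one lineMap_vsub_left)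
open scoped Gradient InnerProductSpace

section Calculus

variable {E : Type*} [NormedAddCommGroup E] [InnerProductSpace ℝ E] [CompleteSpace E] {f : E → ℝ}

theorem HasGradientAt.hasDerivAt_comp_lineMap {g x y : E} {t : ℝ}
    (hf : HasGradientAt f g (lineMap x y t)) :
    HasDerivAt (fun s : ℝ => f (lineMap x y s)) ⟪g, y - x⟫_ℝ t :=
  (hasGradientAt_iff_hasFDerivAt.mp hf).comp_hasDerivAt t hasDerivAt_lineMap

theorem ConvexOn.inner_sub_le_of_hasGradientAt {s : Set E} {g x y : E} (hconv : ConvexOn ℝ s f)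
    (hx : x ∈ s) (hy : y ∈ s) (hf : HasGradientAt f g x) :
    ⟪g, y - x⟫_ℝ ≤ f y - f x := by
  have hline : ConvexOn ℝ (lineMap x y ⁻¹' s) (fun t : ℝ => f (lineMap x y t)) :=
    hconv.comp_affineMap (lineMap x y)
  have hderiv : HasDerivAt (fun t : ℝ => f (lineMap x y t)) ⟪g, y - x⟫_ℝ 0 :=
    HasGradientAt.hasDerivAt_comp_lineMap (by simpa using hf)
  have h := hline.le_slope_of_hasDerivAt (by simpa using hx) (by simpa using hy) one_pos hderiv
  simpa [slope_def_field] using h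

theorem le_add_deriv_add_half_of_deriv_le {φ φ' : ℝ → ℝ} {M : ℝ}
    (hφ : ∀ t, HasDerivAt φ (φ' t) t) (hφ' : ∀ t ∈ Ioo (0 : ℝ) 1, φ' t ≤ φ' 0 + M * t) :
    φ 1 ≤ φ 0 + φ' 0 + M / 2 := by
  set ψ : ℝ → ℝ := fun t => φ t - t * φ' 0 - M / 2 * t ^ 2
  have hψ : ∀ t, HasDerivAt ψ (φ' t - φ' 0 - M * t) t := fun t => by
    refine (((hφ t).fun_sub ((hasDerivAt_id t).mul_const (φ' 0))).fun_sub
      ((hasDerivAt_pow 2 t).const_mul (M / 2))).congr_deriv ?_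
    ring
  have hanti : AntitoneOn ψ (Icc 0 1) := by
    refine antitoneOn_of_hasDerivWithinAt_nonpos (convex_Icc 0 1)
      (fun t _ => (hψ t).continuousAt.continuousWithinAt) (fun t _ => (hψ t).hasDerivWithinAt) ?_
    rw [interior_Icc]
    intro t ht
    linarith [hφ' t ht]
  have h := hanti (left_mem_Icc.mpr zero_le_one) (right_mem_Icc.mpr zero_le_one) zero_le_one
  simp only [ψ] at h
  linarith

theorem le_add_inner_gradient_add_of_lipschitz_gradient {L : ℝ} (hf : Differentiable ℝ f)
    (hL : ∀ x y, ‖∇ f x - ∇ f y‖ ≤ L * ‖x - y‖) (x y : E) :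
    f y ≤ f x + ⟪∇ f x, y - x⟫_ℝ + L / 2 * ‖y - x‖ ^ 2 := by
  have hderiv (t : ℝ) := (hf (lineMap x y t)).hasGradientAt.hasDerivAt_comp_lineMap
  have h := le_add_deriv_add_half_of_deriv_le (M := L * ‖y - x‖ ^ 2) hderiv fun t ht => by
    have hgrowth : ⟪∇ f (lineMap x y t) - ∇ f x, y - x⟫_ℝ ≤ L * ‖y - x‖ ^ 2 * t :=
      calc ⟪∇ f (lineMap x y t) - ∇ f x, y - x⟫_ℝ
          ≤ ‖∇ f (lineMap x y t) - ∇ f x‖ * ‖y - x‖ := real_inner_le_norm _ _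
        _ ≤ L * ‖lineMap x y t - x‖ * ‖y - x‖ := by gcongr; exact hL _ _
        _ = L * ‖y - x‖ ^ 2 * t := by
          rw [← vsub_eq_sub, lineMap_vsub_left, norm_smul, Real.norm_of_nonneg ht.1.le]
          simp only [vsub_eq_sub]; ring
    simp only [lineMap_apply_zero]
    rw [inner_sub_left] at hgrowth
    linarith
  simp only [lineMap_apply_zero, lineMap_apply_one] at h
  linarith

end Calculus

theorem nonneg_of_norm_sub_le_mul {α β : Type*} [NormedAddCommGroup α] [NormedAddCommGroup β]
    {g : α → β} {L : ℝ} (hL : ∀ x y, ‖g x - g y‖ ≤ L * ‖x - y‖) {x y : α} (hxy : x ≠ y) :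
    0 ≤ L :=
  nonneg_of_mul_nonneg_left ((norm_nonneg _).trans (hL x y))
    (norm_pos_iff.mpr (sub_ne_zero.mpr hxy))

namespace FrankWolfe

variable {E : Type*} [NormedAddCommGroup E] [InnerProductSpace ℝ E] [CompleteSpace E] {f : E → ℝ}

theorem step_sub_le {s : Set E} {L γ ε : ℝ} {x v xstar : E} (hconv : ConvexOn ℝ s f)
    (hdiff : Differentiable ℝ f) (hsmooth : ∀ x y, ‖∇ f x - ∇ f y‖ ≤ L * ‖x - y‖)
    (hx : x ∈ s) (hxstar : xstar ∈ s) (hγ : 0 ≤ γ)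
    (horacle : ⟪∇ f x, v⟫_ℝ ≤ ⟪∇ f x, xstar⟫_ℝ + ε) :
    f ((1 - γ) • x + γ • v) - f xstar ≤
      (1 - γ) * (f x - f xstar) + γ * ε + L / 2 * γ ^ 2 * ‖v - x‖ ^ 2 := by
  have hdescent := le_add_inner_gradient_add_of_lipschitz_gradient hdiff hsmooth x
    ((1 - γ) • x + γ • v)
  have hmove : (1 - γ) • x + γ • v - x = γ • (v - x) := by module
  have hlower := hconv.inner_sub_le_of_hasGradientAt hx hxstar (hdiff x).hasGradientAt
  rw [hmove, inner_smul_right, norm_smul, Real.norm_of_nonneg hγ, inner_sub_right] at hdescent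
  rw [inner_sub_right] at hlower
  have hgap : γ * (⟪∇ f x, v⟫_ℝ - ⟪∇ f x, x⟫_ℝ) ≤ γ * (f xstar - f x + ε) := by
    gcongr; linarith
  linear_combination hdescent + hgap

theorem le_two_mul_div_of_recursion {h : ℕ → ℝ} {C : ℝ} (hC : 0 ≤ C)
    (hrec : ∀ k : ℕ, h (k + 1) ≤ (1 - 2 / ((k : ℝ) + 2)) * h k + (2 / ((k : ℝ) + 2)) ^ 2 * C / 2)
    (k : ℕ) : h (k + 1) ≤ 2 * C / ((k : ℝ) + 2) := by
  induction k with
  | zero =>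
    have h1 := hrec 0
    norm_num at h1 ⊢
    linarith
  | succ k ih =>
    have hk : (0 : ℝ) ≤ k := k.cast_nonneg
    have hγ : 0 ≤ 1 - 2 / ((k : ℝ) + 3) := by
      rw [sub_nonneg, div_le_one (by positivity)]; linarith
    have hslack : 2 / ((k : ℝ) + 3) -
        ((1 - 2 / ((k : ℝ) + 3)) * (2 / ((k : ℝ) + 2)) + (2 / ((k : ℝ) + 3)) ^ 2 / 2) =
          2 / (((k : ℝ) + 3) ^ 2 * ((k : ℝ) + 2)) := by
      field_simp; ring
    have hrec' := hrec (k + 1)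
    push_cast at hrec' ⊢
    calc h (k + 1 + 1)
        ≤ (1 - 2 / ((k : ℝ) + 3)) * h (k + 1) + (2 / ((k : ℝ) + 3)) ^ 2 * C / 2 := by
          convert hrec' using 3 <;> ring
      _ ≤ (1 - 2 / ((k : ℝ) + 3)) * (2 * C / ((k : ℝ) + 2)) + (2 / ((k : ℝ) + 3)) ^ 2 * C / 2 := by
          gcongr
      _ ≤ 2 * C / ((k : ℝ) + 1 + 2) := by
          have : 0 ≤ C * (2 / (((k : ℝ) + 3) ^ 2 * ((k : ℝ) + 2))) := by positivity
          rw [← hslack] at this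
          linear_combination this

end FrankWolfe

/-- `x 0` is the paper's initial point `x₋₁`, and `x (k + 1)` is its `x_k`. -/
theorem frankWolfe_approx_oracle_convergence_general {n : ℕ}
    (f : EuclideanSpace ℝ (Fin n) → ℝ) (L : ℝ)
    (hconv : ConvexOn ℝ Set.univ f) (hdiff : Differentiable ℝ f)
    (hsmooth : ∀ x y, ‖gradient f x - gradient f y‖ ≤ L * ‖x - y‖)
    (Ω : Set (EuclideanSpace ℝ (Fin n))) (hΩconv : Convex ℝ Ω)
    (D : ℝ) (hD : ∀ x ∈ Ω, ∀ y ∈ Ω, ‖x - y‖ ≤ D)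
    (xstar : EuclideanSpace ℝ (Fin n)) (hxstarΩ : xstar ∈ Ω)
    (δ : ℝ) (hδ : 0 < δ)
    (x v : ℕ → EuclideanSpace ℝ (Fin n))
    (hx0 : x 0 ∈ Ω)
    (hvΩ : ∀ k, v k ∈ Ω)
    (hvapprox : ∀ k : ℕ, ∀ u ∈ Ω,
      ⟪gradient f (x k), v k⟫_ℝ ≤
        ⟪gradient f (x k), u⟫_ℝ + (L * D ^ 2 / 2) * (2 / ((k : ℝ) + 2)) * δ)
    (hupdate : ∀ k : ℕ,
      x (k + 1) = (1 - 2 / ((k : ℝ) + 2)) • x k + (2 / ((k : ℝ) + 2)) • v k) :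
    ∀ k : ℕ, f (x (k + 1)) - f xstar ≤ 2 * L * D ^ 2 * (1 + δ) / ((k : ℝ) + 2) := by
  have hγ (k : ℕ) : 0 ≤ 2 / ((k : ℝ) + 2) ∧ 2 / ((k : ℝ) + 2) ≤ 1 := by
    refine ⟨by positivity, (div_le_one (by positivity)).mpr ?_⟩
    linarith [k.cast_nonneg (α := ℝ)]
  have hxΩ (k : ℕ) : x k ∈ Ω := by
    induction k with
    | zero => exact hx0
    | succ k ih =>
      rw [hupdate k]
      exact hΩconv ih (hvΩ k) (sub_nonneg.mpr (hγ k).2) (hγ k).1 (by ring)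
  -- taking `u = v 0` in the oracle bound forces `L D² ≥ 0`, which `hsmooth` does not when `n = 0`
  have hLD : 0 ≤ L * D ^ 2 := by
    have := hvapprox 0 (v 0) (hvΩ 0)
    norm_num at this
    nlinarith
  have hcurv (k : ℕ) : L * ‖v k - x k‖ ^ 2 ≤ L * D ^ 2 := by
    by_cases hvx : v k = x k
    · simpa [hvx] using hLD
    · have hL := nonneg_of_norm_sub_le_mul hsmooth hvx
      gcongr
      exact hD _ (hvΩ k) _ (hxΩ k)
  have hrec (k : ℕ) : f (x (k + 1)) - f xstar ≤ (1 - 2 / ((k : ℝ) + 2)) * (f (x k) - f xstar) +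
      (2 / ((k : ℝ) + 2)) ^ 2 * (L * D ^ 2 * (1 + δ)) / 2 := by
    have hstep := FrankWolfe.step_sub_le hconv hdiff hsmooth (mem_univ (x k)) (mem_univ xstar)
      (hγ k).1 (hvapprox k xstar hxstarΩ)
    rw [← hupdate k] at hstep
    have hcurv' := mul_le_mul_of_nonneg_left (hcurv k) (sq_nonneg (2 / ((k : ℝ) + 2)))
    linear_combination hstep + hcurv' / 2
  intro k
  calc f (x (k + 1)) - f xstar
      ≤ 2 * (L * D ^ 2 * (1 + δ)) / ((k : ℝ) + 2) :=
        FrankWolfe.le_two_mul_div_of_recursion (h := fun k => f (x k) - f xstar)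
          (by positivity) hrec k
    _ = 2 * L * D ^ 2 * (1 + δ) / ((k : ℝ) + 2) := by ring

/-- Convergence of Frank-Wolfe with an approximate linear-minimization oracle:
with `γ_k = 2/(k+2)` and oracle error `ε_k = (L D²/2) γ_k δ`, the iterates satisfy
`f(x_k) − f(x*) ≤ 2 L D² (1+δ)/(k+2)`.  Here the Lean index is shifted: `x 0`
is the initial point `x₋₁` and `x (k+1)` is the paper's `x_k`. -/
theorem frankWolfe_approx_oracle_convergence {n : ℕ}
    (f : EuclideanSpace ℝ (Fin n) → ℝ) (L : ℝ)
    (hconv : ConvexOn ℝ Set.univ f) (hdiff : Differentiable ℝ f)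
    (hsmooth : ∀ x y, ‖gradient f x - gradient f y‖ ≤ L * ‖x - y‖)
    (Ω : Set (EuclideanSpace ℝ (Fin n))) (hne : Ω.Nonempty)
    (hcomp : IsCompact Ω) (hΩconv : Convex ℝ Ω)
    (D : ℝ) (hD : ∀ x ∈ Ω, ∀ y ∈ Ω, ‖x - y‖ ≤ D)
    (xstar : EuclideanSpace ℝ (Fin n)) (hxstarΩ : xstar ∈ Ω)
    (hmin : ∀ y ∈ Ω, f xstar ≤ f y)
    (δ : ℝ) (hδ : 0 < δ)
    (x v : ℕ → EuclideanSpace ℝ (Fin n))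
    (hx0 : x 0 ∈ Ω)
    (hvΩ : ∀ k, v k ∈ Ω)
    (hvapprox : ∀ k : ℕ, ∀ u ∈ Ω,
      ⟪gradient f (x k), v k⟫_ℝ ≤
        ⟪gradient f (x k), u⟫_ℝ + (L * D ^ 2 / 2) * (2 / ((k : ℝ) + 2)) * δ)
    (hupdate : ∀ k : ℕ,
      x (k + 1) = (1 - 2 / ((k : ℝ) + 2)) • x k + (2 / ((k : ℝ) + 2)) • v k) :
    ∀ k : ℕ, f (x (k + 1)) - f xstar ≤ 2 * L * D ^ 2 * (1 + δ) / ((k : ℝ) + 2) :=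
  frankWolfe_approx_oracle_convergence_general f L hconv hdiff hsmooth Ω hΩconv D hD xstar hxstarΩ δ
    hδ x v hx0 hvΩ hvapprox hupdate
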